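/- arXiv:1111.1449 — 2 statements merged into one kernel-verified Lean document; each statement's English description precedes it below -/
import Mathlib

section
/- Let c : ℤ × ℤ → ℤ be a bounded two-cocycle on the group ℤ with integer values, i.e. c(m,n) − c(l+m, n) + c(l, m+n) − c(l,m) = 0 for all l,m,n and sup |c| < ∞. Then there exists a function b : ℤ → ℤ with c(m,n) = b(m) − b(m+n) + b(n) for all m,n, and b is a quasimorphism; moreover the real number r = lim_{n→∞} b(n)/n exists, and its class r + ℤ ∈ ℝ/ℤ is independent of the choice of b. -/
/-!
Summing `c j 1` along the integers produces a primitive `b` with `c = δb`: the cocycle identity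
with third argument `1` is exactly the induction step. Since `c` is bounded, `b + D` is
subadditive on `ℕ` and grows at least linearly, so Fekete's lemma gives the limit of `b n / n`.
Two primitives of the same cocycle differ by a homomorphism `n ↦ n k`, which shifts the limit
by the integer `k`.
-/

open Filter Topology

section Primitive

variable {A : Type*} [AddCommGroup A]

def intPrimitive (g : ℤ → A) : ℤ → A
  | (k : ℕ) => ∑ j ∈ Finset.range k, g j
  | .negSucc k => -∑ j ∈ Finset.range (k + 1), g (-(j + 1))

@[simp]
theorem intPrimitive_zero (g : ℤ → A) : intPrimitive g 0 = 0 :=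
  rfl

theorem intPrimitive_add_one (g : ℤ → A) (n : ℤ) :
    intPrimitive g (n + 1) = intPrimitive g n + g n := by
  match n with
  | (k : ℕ) => exact Finset.sum_range_succ _ k
  | .negSucc 0 => simp [intPrimitive]
  | .negSucc (k + 1) =>
    change intPrimitive g (.negSucc k) = intPrimitive g (.negSucc (k + 1)) + g (.negSucc (k + 1))
    simp only [intPrimitive, Finset.sum_range_succ _ (k + 1), Int.negSucc_eq]
    push_cast
    abel

def cocyclePrimitive (c : ℤ → ℤ → A) (n : ℤ) : A :=
  c 0 0 - intPrimitive (fun j => c j 1) n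

theorem cocycle_eq_coboundary_cocyclePrimitive (c : ℤ → ℤ → A)
    (hc : ∀ l m n : ℤ, c m n - c (l + m) n + c l (m + n) - c l m = 0) (m n : ℤ) :
    c m n = cocyclePrimitive c m - cocyclePrimitive c (m + n) + cocyclePrimitive c n := by
  set b := cocyclePrimitive c
  have b_add_one : ∀ n, b (n + 1) = b n - c n 1 := fun n => by
    simp only [b, cocyclePrimitive, intPrimitive_add_one]
    abel
  have defect_add_one : ∀ n, c m (n + 1) - (b m - b (m + (n + 1)) + b (n + 1)) =
      c m n - (b m - b (m + n) + b n) := fun n => by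
    rw [← add_assoc, b_add_one, b_add_one]
    linear_combination (norm := abel) hc m n 1
  rw [← sub_eq_zero]
  induction n using Int.induction_on with
  | zero =>
    have h := hc (-m) m 0
    simp only [neg_add_cancel, add_zero] at h
    simp only [b, cocyclePrimitive, add_zero, intPrimitive_zero]
    linear_combination (norm := abel) h
  | succ n ih => rwa [defect_add_one]
  | pred n ih => rwa [← defect_add_one, sub_add_cancel]

theorem sub_eq_zsmul_of_coboundary_eq {b b' : ℤ → A}
    (h : ∀ m n : ℤ, b m - b (m + n) + b n = b' m - b' (m + n) + b' n) (n : ℤ) :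
    b n - b' n = n • (b 1 - b' 1) := by
  let d : ℤ →+ A := AddMonoidHom.mk' (fun n => b n - b' n) fun m n => by
    linear_combination (norm := abel) -h m n
  simpa only [d, AddMonoidHom.mk'_apply, smul_eq_mul, mul_one] using d.map_zsmul n 1

end Primitive

theorem exists_tendsto_div_of_abs_add_sub_le {u : ℕ → ℝ} {D : ℝ}
    (h : ∀ m n, |u (m + n) - u m - u n| ≤ D) :
    ∃ r, Tendsto (fun n => u n / n) atTop (𝓝 r) := by
  have hu₀ : |u 0| ≤ D := by simpa using h 0 0
  have hsub : Subadditive (fun n => u n + D) := fun m n => by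
    linarith [(abs_le.mp (h m n)).2]
  have hlin : ∀ n : ℕ, n * (u 1 - D) ≤ u n + D := by
    intro n
    induction n with
    | zero => simp only [CharP.cast_eq_zero, zero_mul]; linarith [neg_le_of_abs_le hu₀]
    | succ n ih =>
      push_cast
      linarith [(abs_le.mp (h n 1)).1]
  have hbdd : BddBelow (Set.range fun n => (u n + D) / n) := by
    refine ⟨min 0 (u 1 - D), ?_⟩
    rintro _ ⟨n, rfl⟩
    rcases n.eq_zero_or_pos with rfl | hn
    · simp
    · refine (min_le_right _ _).trans ((le_div_iff₀ (by exact_mod_cast hn)).2 ?_)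
      linarith [hlin n]
  refine ⟨hsub.lim, ?_⟩
  have h := (hsub.tendsto_lim hbdd).sub (tendsto_const_div_atTop_nhds_zero_nat D)
  rw [sub_zero] at h
  exact h.congr fun n => by simp only [add_div, add_sub_cancel_right]

theorem sub_eq_of_tendsto_div_of_sub_eq_mul {u v : ℕ → ℝ} {k r r' : ℝ}
    (huv : ∀ n : ℕ, u n - v n = n * k) (hu : Tendsto (fun n => u n / n) atTop (𝓝 r))
    (hv : Tendsto (fun n => v n / n) atTop (𝓝 r')) : r - r' = k := by
  refine tendsto_nhds_unique (hu.sub hv) (tendsto_const_nhds.congr' ?_)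
  filter_upwards [eventually_ne_atTop 0] with n hn
  rw [div_sub_div_same, huv, mul_div_cancel_left₀ _ (Nat.cast_ne_zero.mpr hn)]

theorem stmt_6 (c : ℤ → ℤ → ℤ)
    (hcocycle : ∀ l m n : ℤ, c m n - c (l + m) n + c l (m + n) - c l m = 0)
    (hbdd : ∃ M : ℤ, ∀ m n : ℤ, |c m n| ≤ M) :
    ∃ b : ℤ → ℤ,
      (∀ m n : ℤ, c m n = b m - b (m + n) + b n) ∧
      (∃ D : ℝ, ∀ m n : ℤ, |(b m : ℝ) - b (m + n) + b n| ≤ D) ∧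
      ∃ r : ℝ, Tendsto (fun n : ℕ => (b n : ℝ) / n) atTop (nhds r) ∧
        ∀ b' : ℤ → ℤ, (∀ m n : ℤ, c m n = b' m - b' (m + n) + b' n) →
          ∀ r' : ℝ, Tendsto (fun n : ℕ => (b' n : ℝ) / n) atTop (nhds r') →
            ∃ k : ℤ, r - r' = (k : ℝ) := by
  obtain ⟨M, hM⟩ := hbdd
  set b := cocyclePrimitive c
  have hcob : ∀ m n, c m n = b m - b (m + n) + b n :=
    cocycle_eq_coboundary_cocyclePrimitive c hcocycle
  have hdefect : ∀ m n : ℤ, |(b m : ℝ) - b (m + n) + b n| ≤ M := fun m n => by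
    exact_mod_cast hcob m n ▸ hM m n
  obtain ⟨r, hr⟩ := exists_tendsto_div_of_abs_add_sub_le (u := fun n => (b n : ℝ)) fun m n => by
    rw [← abs_neg]
    convert hdefect m n using 2
    push_cast
    ring
  refine ⟨b, hcob, ⟨M, hdefect⟩, r, hr, fun b' hcob' r' hr' => ⟨b 1 - b' 1, ?_⟩⟩
  refine sub_eq_of_tendsto_div_of_sub_eq_mul (fun n => ?_) hr hr'
  have hhom := sub_eq_zsmul_of_coboundary_eq (fun m n => (hcob m n).symm.trans (hcob' m n)) n
  exact_mod_cast hhom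
end

section
/- Let G be a group, and let K : G → C(X, ℝ)/ℝ be a one-cocycle for the action of G on a space X, i.e. K(gh) = K(g)∘h + K(h) for all g,h ∈ G (where G acts on functions by precomposition). Fix two points x, y ∈ X and suppose the two-cochains G_x(g,h) := K(g)(hx) − K(g)(x) and G_y(g,h) := K(g)(hy) − K(g)(y) are bounded on G × G. Then the map q : G → ℝ defined by q(g) := K(g)(y) − K(g)(x) is a quasimorphism with defect D(q) ≤ ‖G_x‖∞ + ‖G_y‖∞. -/
theorem defect_eq_sub_of_cocycle {G X : Type*} [Mul G] [SMul G X] {K : G → X → ℝ}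
    (hK : ∀ (g h : G) (z w : X),
      K (g * h) z - K (g * h) w = (K g (h • z) - K g (h • w)) + (K h z - K h w))
    (x y : X) (f g : G) :
    (K f y - K f x) - (K (f * g) y - K (f * g) x) + (K g y - K g x) =
      (K f (g • x) - K f x) - (K f (g • y) - K f y) := by
  rw [hK f g y x]
  ring

/-- `K : G → C(X,ℝ)/ℝ` is modelled by representatives `K : G → X → ℝ`, with the
cocycle identity `K(gh) = K(g)∘h + K(h)` holding modulo constants, i.e. on
differences of values. -/
theorem stmt_7 {G X : Type*} [Group G] [MulAction G X] (K : G → X → ℝ)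
    (hK : ∀ (g h : G) (z w : X),
      K (g * h) z - K (g * h) w = (K g (h • z) - K g (h • w)) + (K h z - K h w))
    (x y : X) (Bx By : ℝ)
    (hBx : ∀ g h : G, |K g (h • x) - K g x| ≤ Bx)
    (hBy : ∀ g h : G, |K g (h • y) - K g y| ≤ By) :
    ∀ f g : G,
      |(K f y - K f x) - (K (f * g) y - K (f * g) x) + (K g y - K g x)| ≤
        Bx + By := by
  intro f g
  rw [defect_eq_sub_of_cocycle hK x y f g]
  exact (abs_sub _ _).trans (add_le_add (hBx f g) (hBy f g))
end
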